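/- For the Caldeira-Leggett-type transfer matrix couplings in the self-dual case λ_x = λ_zz = λ and q_x = q_zz = q, defining the edge weights w₀ = e^{J₀(m)} - 1 with e^{J₀(m)} = (1-2q)(1+mλ)/(1-mλ) and w₁ = e^{J₁(m)} - 1 with e^{J₁(m)} = mλ/(q+(1-q)λ²), and t_i = (1 - 2e^{J_i} + e^{2J_i+K_i})/(e^{J_i}-1)² where e^{2J₀+K₀} satisfies 1-2e^{J₀}+e^{2J₀+K₀} = 4(q+(1-q)λ²)/(1-mλ)² and 1-2e^{J₁}+e^{2J₁+K₁} = (1-mλ)²/(q+(1-q)λ²), then the self-duality conditions hold: w₀·w₁·t₁ = 2 and t₀ = t₁. -/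

import Mathlib

/-!
Write `Q = q + (1 - q) λ²` and `D = 1 - mλ`. Using `m² = 1`, both edge weights are multiples of
the same number `s = mλ(1 - q) - q`: `w₀ = 2s / D` and `w₁ = s D / Q`. Hence `w₀ / w₁ = 2Q / D²`,
which is exactly the factor relating the two numerators `4Q / D²` and `D² / Q` of `t₀` and `t₁`;
both self-duality conditions follow.
-/

section WeightRatio

variable {K : Type*} [Field K]

theorem self_duality_of_weight_ratio [NeZero (2 : K)] {Q D w₀ w₁ t₀ t₁ : K}
    (hQ : Q ≠ 0) (hD : D ≠ 0) (hw₁ : w₁ ≠ 0) (hratio : w₀ * D ^ 2 = 2 * Q * w₁)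
    (ht₀ : t₀ = 4 * Q / D ^ 2 / w₀ ^ 2) (ht₁ : t₁ = D ^ 2 / Q / w₁ ^ 2) :
    w₀ * w₁ * t₁ = 2 ∧ t₀ = t₁ := by
  have hw₀ : w₀ = 2 * Q * w₁ / D ^ 2 := by rw [← hratio]; field_simp
  subst hw₀ ht₀ ht₁
  constructor
  · field_simp
  · field_simp
    ring

theorem exp_J₀_sub_one {q m lam : K} (hD : 1 - m * lam ≠ 0) :
    (1 - 2 * q) * (1 + m * lam) / (1 - m * lam) - 1
      = 2 * (m * lam * (1 - q) - q) / (1 - m * lam) := by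
  field_simp
  ring

theorem exp_J₁_sub_one {q m lam : K} (hm : m ^ 2 = 1) (hQ : q + (1 - q) * lam ^ 2 ≠ 0) :
    m * lam / (q + (1 - q) * lam ^ 2) - 1
      = (m * lam * (1 - q) - q) * (1 - m * lam) / (q + (1 - q) * lam ^ 2) := by
  rw [div_sub_one hQ]
  congr 1
  linear_combination lam ^ 2 * (1 - q) * hm

theorem weight_ratio {q m lam : K} (hm : m ^ 2 = 1) (hQ : q + (1 - q) * lam ^ 2 ≠ 0)
    (hD : 1 - m * lam ≠ 0) :
    ((1 - 2 * q) * (1 + m * lam) / (1 - m * lam) - 1) * (1 - m * lam) ^ 2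
      = 2 * (q + (1 - q) * lam ^ 2) * (m * lam / (q + (1 - q) * lam ^ 2) - 1) := by
  rw [exp_J₀_sub_one hD, exp_J₁_sub_one hm hQ]
  generalize q + (1 - q) * lam ^ 2 = Q at hQ ⊢
  field_simp

end WeightRatio

theorem self_duality_conditions_general
    (lam q m : ℝ)
    (hm : m = 1 ∨ m = -1)
    (hpos : 0 < q + (1 - q) * lam ^ 2) (hne : 1 - m * lam ≠ 0)
    (eJ0 eJ1 E0 E1 w0 w1 t0 t1 : ℝ)
    (heJ0 : eJ0 = (1 - 2 * q) * (1 + m * lam) / (1 - m * lam))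
    (heJ1 : eJ1 = m * lam / (q + (1 - q) * lam ^ 2))
    (hw0 : w0 = eJ0 - 1) (hw1 : w1 = eJ1 - 1)
    (hw1ne : w1 ≠ 0)
    (hE0 : 1 - 2 * eJ0 + E0 = 4 * (q + (1 - q) * lam ^ 2) / (1 - m * lam) ^ 2)
    (hE1 : 1 - 2 * eJ1 + E1 = (1 - m * lam) ^ 2 / (q + (1 - q) * lam ^ 2))
    (ht0 : t0 = (1 - 2 * eJ0 + E0) / w0 ^ 2)
    (ht1 : t1 = (1 - 2 * eJ1 + E1) / w1 ^ 2) :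
    w0 * w1 * t1 = 2 ∧ t0 = t1 := by
  have hm2 : m ^ 2 = 1 := by rcases hm with rfl | rfl <;> norm_num
  have hratio : w0 * (1 - m * lam) ^ 2 = 2 * (q + (1 - q) * lam ^ 2) * w1 := by
    rw [hw0, hw1, heJ0, heJ1]
    exact weight_ratio hm2 hpos.ne' hne
  exact self_duality_of_weight_ratio hpos.ne' hne hw1ne hratio (hE0 ▸ ht0) (hE1 ▸ ht1)

/-- Kramers–Wannier self-duality conditions for the disordered Ashkin–Teller weights in
the self-dual case `λ_x = λ_zz = λ`, `q_x = q_zz = q`: with the stated edge weights,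
`w₀ w₁ t₁ = 2` and `t₀ = t₁`. -/
theorem self_duality_conditions
    (lam q m : ℝ) (hlam : lam ∈ Set.Ioo (0 : ℝ) 1) (hq : q ∈ Set.Ico (0 : ℝ) (1 / 2))
    (hm : m = 1 ∨ m = -1)
    (hpos : 0 < q + (1 - q) * lam ^ 2) (hne : 1 - m * lam ≠ 0)
    (eJ0 eJ1 E0 E1 w0 w1 t0 t1 : ℝ)
    (heJ0 : eJ0 = (1 - 2 * q) * (1 + m * lam) / (1 - m * lam))
    (heJ1 : eJ1 = m * lam / (q + (1 - q) * lam ^ 2))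
    (hw0 : w0 = eJ0 - 1) (hw1 : w1 = eJ1 - 1)
    (hw0ne : w0 ≠ 0) (hw1ne : w1 ≠ 0)
    (hE0 : 1 - 2 * eJ0 + E0 = 4 * (q + (1 - q) * lam ^ 2) / (1 - m * lam) ^ 2)
    (hE1 : 1 - 2 * eJ1 + E1 = (1 - m * lam) ^ 2 / (q + (1 - q) * lam ^ 2))
    (ht0 : t0 = (1 - 2 * eJ0 + E0) / w0 ^ 2)
    (ht1 : t1 = (1 - 2 * eJ1 + E1) / w1 ^ 2) :
    w0 * w1 * t1 = 2 ∧ t0 = t1 :=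
  self_duality_conditions_general lam q m hm hpos hne eJ0 eJ1 E0 E1 w0 w1 t0 t1 heJ0 heJ1 hw0 hw1
    hw1ne hE0 hE1 ht0 ht1
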